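/- Let X be a σ-finite measure space and φ ∈ L^∞(X^{n+1}). For kernels A_1, …, A_n ∈ L^2(X × X), define M_φ(A_1,…,A_n)(t_0, t_n) = ∫_{X^{n-1}} φ(t_0,…,t_n) A_1(t_0,t_1) A_2(t_1,t_2) ⋯ A_n(t_{n-1},t_n) dt_1⋯dt_{n-1}. Then M_φ(A_1,…,A_n) ∈ L^2(X × X) and ‖M_φ(A_1,…,A_n)‖_{L^2(X×X)} ≤ ‖φ‖_∞ ∏_{i=1}^n ‖A_i‖_{L^2(X×X)} (in fact Hilbert–Schmidt norm bounded by ‖φ‖_∞ times the product of the L^2 norms, using Cauchy–Schwarz). -/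

import Mathlib

/-!
Write `n = k + 1`. The map `(t₀, tₙ, u) ↦ (t₀, u, tₙ)` is measure preserving, so the essential
bound on `φ` holds along almost every chain, and pointwise almost everywhere
`|M_φ(A₁,…,Aₙ)| ≤ C · (|A₁| ∘ ⋯ ∘ |Aₙ|)`, where `∘` is composition of nonnegative integral kernels.
By Cauchy–Schwarz in the middle variable, `(∫ f(a,t) g(t,b) dt)² ≤ ∫ f(a,t)² dt · ∫ g(t,b)² dt`,
whose integral over `(a, b)` factors, so composition of kernels is submultiplicative for the
`L²(X × X)` norm; induction on the number of factors finishes the proof.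
-/

open MeasureTheory Measure

/-- The chain of points `t₀, u₁, …, u_{n-1}, tₙ`, as a function of the index `m ∈ {0, …, n}`. -/
def chainPt {X : Type*} (n : ℕ) (t0 tn : X) (u : Fin (n - 1) → X) (m : ℕ) : X :=
  if m = 0 then t0 else if h : m - 1 < n - 1 then u ⟨m - 1, h⟩ else tn

open scoped ENNReal

theorem sq_lintegral_mul_le {α : Type*} [MeasurableSpace α] (μ : Measure α) {f g : α → ℝ≥0∞}
    (hf : AEMeasurable f μ) (hg : AEMeasurable g μ) :
    (∫⁻ x, f x * g x ∂μ) ^ 2 ≤ (∫⁻ x, f x ^ 2 ∂μ) * ∫⁻ x, g x ^ 2 ∂μ := by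
  have h := ENNReal.lintegral_mul_le_Lp_mul_Lq μ Real.HolderConjugate.two_two hf hg
  simp only [Pi.mul_apply, ENNReal.rpow_two] at h
  refine (pow_le_pow_left₀ zero_le h 2).trans_eq ?_
  rw [mul_pow, ← ENNReal.rpow_mul_natCast, ← ENNReal.rpow_mul_natCast]
  norm_num

theorem lintegral_pi_fin_succ_cons {k : ℕ} {α : Fin (k + 1) → Type*} [∀ i, MeasurableSpace (α i)]
    (μ : ∀ i, Measure (α i)) [∀ i, SigmaFinite (μ i)] {F : (∀ i, α i) → ℝ≥0∞}
    (hF : Measurable F) :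
    ∫⁻ u, F u ∂Measure.pi μ =
      ∫⁻ t, ∫⁻ v, F (Fin.cons t v) ∂Measure.pi (fun i => μ i.succ) ∂μ 0 := by
  rw [← ((measurePreserving_piFinSuccAbove μ 0).symm).lintegral_comp hF]
  refine (lintegral_prod _ (hF.comp (MeasurableEquiv.measurable _)).aemeasurable).trans ?_
  simp_rw [MeasurableEquiv.piFinSuccAbove_symm_apply, Fin.insertNthEquiv, Equiv.coe_fn_mk,
    Fin.insertNth_zero]
  rfl

theorem eLpNorm_two_sq_eq_lintegral {α ε : Type*} [MeasurableSpace α] [ENorm ε] (f : α → ε)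
    (μ : Measure α) :
    eLpNorm f 2 μ ^ 2 = ∫⁻ x, ‖f x‖ₑ ^ 2 ∂μ := by
  simpa using eLpNorm_nnreal_pow_eq_lintegral (f := f) (μ := μ) (p := 2) two_ne_zero

section

variable {X : Type*}

theorem chainPt_zero (n : ℕ) (a b : X) (u : Fin (n - 1) → X) : chainPt n a b u 0 = a := by
  simp [chainPt]

theorem chainPt_succ_cons (k : ℕ) (a b t : X) (v : Fin k → X) (m : ℕ) :
    chainPt (k + 2) a b (Fin.cons t v) (m + 1) = chainPt (k + 1) t b v m := by
  rcases m with _ | m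
  · simp [chainPt]
  · by_cases hm : m < k
    · simpa [chainPt, hm] using Fin.cons_succ (α := fun _ => X) t v ⟨m, hm⟩
    · simp [chainPt, hm]

theorem chainPt_eq_cons_snoc (k : ℕ) (a b : X) (u : Fin k → X) (j : Fin (k + 2)) :
    chainPt (k + 1) a b u j = (Fin.cons a (Fin.snoc u b) : Fin (k + 2) → X) j := by
  induction j using Fin.cases with
  | zero => simp [chainPt]
  | succ i =>
    induction i using Fin.lastCases with
    | last => simp [chainPt]
    | cast i => simp [chainPt]

variable [MeasurableSpace X]

theorem measurable_chainPt (n m : ℕ) :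
    Measurable fun q : (X × X) × (Fin (n - 1) → X) => chainPt n q.1.1 q.1.2 q.2 m := by
  unfold chainPt
  split_ifs
  · exact measurable_fst.fst
  · exact (measurable_pi_apply _).comp measurable_snd
  · exact measurable_fst.snd

theorem measurable_prod_chainPt {M : Type*} [CommMonoid M] [MeasurableSpace M] [MeasurableMul₂ M]
    (n : ℕ) {f : Fin n → X × X → M} (hf : ∀ i, Measurable (f i)) :
    Measurable fun q : (X × X) × (Fin (n - 1) → X) =>
      ∏ m : Fin n, f m (chainPt n q.1.1 q.1.2 q.2 m, chainPt n q.1.1 q.1.2 q.2 (m + 1)) :=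
  Finset.measurable_prod _ fun m _ =>
    (hf m).comp ((measurable_chainPt n m).prodMk (measurable_chainPt n (m + 1)))

noncomputable def kernelComp (μ : Measure X) :
    ∀ k : ℕ, (Fin (k + 1) → X × X → ℝ≥0∞) → X × X → ℝ≥0∞
  | 0, f => f 0
  | k + 1, f => fun p => ∫⁻ t, f 0 (p.1, t) * kernelComp μ k (Fin.tail f) (t, p.2) ∂μ

variable (μ : Measure X)

section

variable [SFinite μ]

theorem measurable_kernelComp :
    ∀ (k : ℕ) {f : Fin (k + 1) → X × X → ℝ≥0∞}, (∀ i, Measurable (f i)) →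
      Measurable (kernelComp μ k f)
  | 0, _, hf => hf 0
  | k + 1, _, hf =>
    (((hf 0).comp (measurable_fst.fst.prodMk measurable_snd)).mul
      ((measurable_kernelComp k fun i => hf i.succ).comp
        (measurable_snd.prodMk measurable_fst.snd))).lintegral_prod_right'

theorem lintegral_kernelComp_sq_le :
    ∀ (k : ℕ) {f : Fin (k + 1) → X × X → ℝ≥0∞}, (∀ i, Measurable (f i)) →
      ∫⁻ p, kernelComp μ k f p ^ 2 ∂μ.prod μ ≤ ∏ i, ∫⁻ p, f i p ^ 2 ∂μ.prod μ
  | 0, _, _ => by simp [kernelComp]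
  | k + 1, f, hf => by
    set g := kernelComp μ k (Fin.tail f)
    have hg : Measurable g := measurable_kernelComp μ k fun i => hf i.succ
    calc ∫⁻ p, kernelComp μ (k + 1) f p ^ 2 ∂μ.prod μ
        ≤ ∫⁻ p, (∫⁻ t, f 0 (p.1, t) ^ 2 ∂μ) * (∫⁻ t, g (t, p.2) ^ 2 ∂μ) ∂μ.prod μ :=
          lintegral_mono fun p => sq_lintegral_mul_le μ
            ((hf 0).comp measurable_prodMk_left).aemeasurable
            (hg.comp measurable_prodMk_right).aemeasurable
      _ = (∫⁻ p, f 0 p ^ 2 ∂μ.prod μ) * ∫⁻ p, g p ^ 2 ∂μ.prod μ := by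
          rw [lintegral_prod_mul (f := fun a => ∫⁻ t, f 0 (a, t) ^ 2 ∂μ)
              (g := fun b => ∫⁻ t, g (t, b) ^ 2 ∂μ)
              ((hf 0).pow_const 2).lintegral_prod_right'.aemeasurable
              ((hg.pow_const 2).comp measurable_swap).lintegral_prod_right'.aemeasurable,
            lintegral_prod _ ((hf 0).pow_const 2).aemeasurable,
            lintegral_prod_symm _ (hg.pow_const 2).aemeasurable]
      _ ≤ (∫⁻ p, f 0 p ^ 2 ∂μ.prod μ) * ∏ i : Fin (k + 1), ∫⁻ p, f i.succ p ^ 2 ∂μ.prod μ := by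
          gcongr
          exact lintegral_kernelComp_sq_le k fun i => hf i.succ
      _ = ∏ i, ∫⁻ p, f i p ^ 2 ∂μ.prod μ :=
          (Fin.prod_univ_succ fun i => ∫⁻ p, f i p ^ 2 ∂μ.prod μ).symm

end

variable [SigmaFinite μ]

theorem measurePreserving_chainPt (k : ℕ) :
    MeasurePreserving
      (fun q : (X × X) × (Fin k → X) => fun j : Fin (k + 2) => chainPt (k + 1) q.1.1 q.1.2 q.2 j)
      ((μ.prod μ).prod (Measure.pi fun _ => μ)) (Measure.pi fun _ => μ) := by
  have h := ((measurePreserving_piFinSuccAbove (fun _ : Fin (k + 2) => μ) 0).symm.comp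
    ((MeasurePreserving.id μ).prod
      (measurePreserving_piFinSuccAbove (fun _ : Fin (k + 1) => μ) (Fin.last k)).symm)).comp
    (measurePreserving_prodAssoc μ μ (Measure.pi fun _ : Fin k => μ))
  convert h using 1
  funext ⟨⟨a, b⟩, u⟩ j
  simp only [chainPt_eq_cons_snoc, MeasurableEquiv.piFinSuccAbove_symm_apply,
    Fin.insertNthEquiv_zero, Fin.insertNthEquiv_last]
  rfl

theorem lintegral_prod_chainPt_eq_kernelComp :
    ∀ (k : ℕ) {f : Fin (k + 1) → X × X → ℝ≥0∞}, (∀ i, Measurable (f i)) → ∀ a b : X,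
      ∫⁻ u : Fin k → X, ∏ m : Fin (k + 1),
          f m (chainPt (k + 1) a b u m, chainPt (k + 1) a b u (m + 1)) ∂(Measure.pi fun _ => μ)
        = kernelComp μ k f (a, b)
  | 0, f, _, a, b => by
    simp [chainPt, kernelComp]
  | k + 1, f, hf, a, b => by
    refine (lintegral_pi_fin_succ_cons (fun _ => μ)
      ((measurable_prod_chainPt (k + 2) hf).comp (measurable_prodMk_left (x := (a, b))))).trans ?_
    refine lintegral_congr fun t => ?_
    simp only [Function.comp_apply, Fin.prod_univ_succ (n := k + 1), Fin.val_zero, Fin.val_succ,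
      chainPt_zero, chainPt_succ_cons]
    rw [lintegral_const_mul _ ?_]
    · exact congrArg (f 0 (a, t) * ·)
        (lintegral_prod_chainPt_eq_kernelComp k (fun i => hf i.succ) t b)
    · exact (measurable_prod_chainPt (k + 1) fun i => hf i.succ).comp
        (measurable_prodMk_left (x := (t, b)))

noncomputable def multilinearSchur (n : ℕ) (φ : (Fin (n + 1) → X) → ℂ)
    (A : Fin n → X × X → ℂ) (p : X × X) : ℂ :=
  ∫ u : Fin (n - 1) → X,
    φ (fun j => chainPt n p.1 p.2 u j) *
      ∏ m : Fin n, A m (chainPt n p.1 p.2 u m, chainPt n p.1 p.2 u (m + 1))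
    ∂(Measure.pi fun _ => μ)

theorem stronglyMeasurable_multilinearSchur {n : ℕ} {φ : (Fin (n + 1) → X) → ℂ}
    {A : Fin n → X × X → ℂ} (hφ : Measurable φ) (hA : ∀ i, Measurable (A i)) :
    StronglyMeasurable (multilinearSchur μ n φ A) :=
  ((hφ.comp (measurable_pi_lambda _ fun j => measurable_chainPt n j)).mul
    (measurable_prod_chainPt n hA)).stronglyMeasurable.integral_prod_right'

theorem ae_enorm_multilinearSchur_le {k : ℕ} {φ : (Fin (k + 2) → X) → ℂ} {C : ℝ}
    (hφ : ∀ᵐ x ∂(Measure.pi fun _ => μ), ‖φ x‖ ≤ C) {A : Fin (k + 1) → X × X → ℂ}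
    (hA : ∀ i, Measurable (A i)) :
    ∀ᵐ p ∂μ.prod μ, ‖multilinearSchur μ (k + 1) φ A p‖ₑ ≤
      ENNReal.ofReal C * kernelComp μ k (fun i p => ‖A i p‖ₑ) p := by
  have hφ_chain := (measurePreserving_chainPt μ k).quasiMeasurePreserving.ae hφ
  filter_upwards [Measure.ae_ae_of_ae_prod hφ_chain] with p hp
  rw [← lintegral_prod_chainPt_eq_kernelComp μ k (fun i => (hA i).enorm),
    ← lintegral_const_mul' _ _ ENNReal.ofReal_ne_top]
  refine (enorm_integral_le_lintegral_enorm _).trans (lintegral_mono_ae ?_)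
  filter_upwards [hp] with u hu
  rw [enorm_mul]
  refine mul_le_mul' (ofReal_norm (φ _) ▸ ENNReal.ofReal_le_ofReal hu) ?_
  simp only [enorm_eq_nnnorm, nnnorm_prod, ENNReal.ofNNReal_finsetProd, le_refl]

theorem eLpNorm_multilinearSchur_le {k : ℕ} {φ : (Fin (k + 2) → X) → ℂ} {C : ℝ}
    (hφ : ∀ᵐ x ∂(Measure.pi fun _ => μ), ‖φ x‖ ≤ C) {A : Fin (k + 1) → X × X → ℂ}
    (hA : ∀ i, Measurable (A i)) :
    eLpNorm (multilinearSchur μ (k + 1) φ A) 2 (μ.prod μ) ≤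
      ENNReal.ofReal C * ∏ i, eLpNorm (A i) 2 (μ.prod μ) := by
  have hK := measurable_kernelComp μ k fun i => (hA i).enorm
  rw [← ENNReal.pow_le_pow_left_iff two_ne_zero, mul_pow, ← Finset.prod_pow]
  simp only [eLpNorm_two_sq_eq_lintegral]
  calc ∫⁻ p, ‖multilinearSchur μ (k + 1) φ A p‖ₑ ^ 2 ∂μ.prod μ
      ≤ ∫⁻ p, (ENNReal.ofReal C * kernelComp μ k (fun i p => ‖A i p‖ₑ) p) ^ 2 ∂μ.prod μ :=
        lintegral_mono_ae <| (ae_enorm_multilinearSchur_le μ hφ hA).mono fun p hp =>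
          pow_le_pow_left₀ zero_le hp 2
    _ = ENNReal.ofReal C ^ 2 * ∫⁻ p, kernelComp μ k (fun i p => ‖A i p‖ₑ) p ^ 2 ∂μ.prod μ := by
        simp_rw [mul_pow]
        exact lintegral_const_mul _ (hK.pow_const 2)
    _ ≤ ENNReal.ofReal C ^ 2 * ∏ i, ∫⁻ p, ‖A i p‖ₑ ^ 2 ∂μ.prod μ := by
        gcongr
        exact lintegral_kernelComp_sq_le μ k fun i => (hA i).enorm

end

theorem multilinear_schur_hilbert_schmidt_general
    {X : Type*} [MeasurableSpace X] (μ : Measure X) [SigmaFinite μ]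
    (n : ℕ) (hn : 1 ≤ n)
    (φ : (Fin (n + 1) → X) → ℂ) (hφm : Measurable φ)
    (C : ℝ)
    (hφb : ∀ᵐ x ∂(Measure.pi fun _ : Fin (n + 1) => μ), ‖φ x‖ ≤ C)
    (A : Fin n → X × X → ℂ) (hAm : ∀ i, Measurable (A i))
    (hA : ∀ i, MemLp (A i) 2 (μ.prod μ)) :
    MemLp (fun p : X × X =>
        ∫ u : Fin (n - 1) → X,
          φ (fun j => chainPt n p.1 p.2 u j.1) *
            ∏ m : Fin n, A m (chainPt n p.1 p.2 u m.1, chainPt n p.1 p.2 u (m.1 + 1))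
          ∂(Measure.pi fun _ => μ)) 2 (μ.prod μ)
    ∧ eLpNorm (fun p : X × X =>
        ∫ u : Fin (n - 1) → X,
          φ (fun j => chainPt n p.1 p.2 u j.1) *
            ∏ m : Fin n, A m (chainPt n p.1 p.2 u m.1, chainPt n p.1 p.2 u (m.1 + 1))
          ∂(Measure.pi fun _ => μ)) 2 (μ.prod μ)
      ≤ ENNReal.ofReal C * ∏ i : Fin n, eLpNorm (A i) 2 (μ.prod μ) := by
  change MemLp (multilinearSchur μ n φ A) 2 (μ.prod μ) ∧
    eLpNorm (multilinearSchur μ n φ A) 2 (μ.prod μ) ≤ _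
  obtain ⟨k, rfl⟩ : ∃ k, n = k + 1 := ⟨n - 1, by omega⟩
  have hbound := eLpNorm_multilinearSchur_le μ hφb hAm
  exact ⟨⟨(stronglyMeasurable_multilinearSchur μ hφm hAm).aestronglyMeasurable,
    hbound.trans_lt <| ENNReal.mul_lt_top ENNReal.ofReal_lt_top <|
      ENNReal.prod_lt_top fun i _ => (hA i).2⟩, hbound⟩

/-- For `φ ∈ L^∞(X^{n+1})` (with essential bound `C`) and Hilbert–Schmidt kernels
`A₁, …, Aₙ ∈ L²(X × X)`, the multilinear Schur multiplier
`M_φ(A₁,…,Aₙ)(t₀,tₙ) = ∫ φ(t₀,…,tₙ) A₁(t₀,t₁)⋯Aₙ(t_{n-1},tₙ) dt₁⋯dt_{n-1}`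
is again in `L²(X × X)`, with `‖M_φ(A₁,…,Aₙ)‖₂ ≤ C ∏ᵢ ‖Aᵢ‖₂`. -/
theorem multilinear_schur_hilbert_schmidt
    {X : Type*} [MeasurableSpace X] (μ : Measure X) [SigmaFinite μ]
    (n : ℕ) (hn : 1 ≤ n)
    (φ : (Fin (n + 1) → X) → ℂ) (hφm : Measurable φ)
    (C : ℝ) (hC0 : 0 ≤ C)
    (hφb : ∀ᵐ x ∂(Measure.pi fun _ : Fin (n + 1) => μ), ‖φ x‖ ≤ C)
    (A : Fin n → X × X → ℂ) (hAm : ∀ i, Measurable (A i))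
    (hA : ∀ i, MemLp (A i) 2 (μ.prod μ)) :
    MemLp (fun p : X × X =>
        ∫ u : Fin (n - 1) → X,
          φ (fun j => chainPt n p.1 p.2 u j.1) *
            ∏ m : Fin n, A m (chainPt n p.1 p.2 u m.1, chainPt n p.1 p.2 u (m.1 + 1))
          ∂(Measure.pi fun _ => μ)) 2 (μ.prod μ)
    ∧ eLpNorm (fun p : X × X =>
        ∫ u : Fin (n - 1) → X,
          φ (fun j => chainPt n p.1 p.2 u j.1) *
            ∏ m : Fin n, A m (chainPt n p.1 p.2 u m.1, chainPt n p.1 p.2 u (m.1 + 1))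
          ∂(Measure.pi fun _ => μ)) 2 (μ.prod μ)
      ≤ ENNReal.ofReal C * ∏ i : Fin n, eLpNorm (A i) 2 (μ.prod μ) :=
  multilinear_schur_hilbert_schmidt_general μ n hn φ hφm C hφb A hAm hA
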